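/- Let θ ∈ (0, π/2] and let A = a₀·I + a·σ, B = b₀·I + b·σ, C = c₀·I + c·σ be qubit observables whose Bloch vectors a,b,c ∈ ℝ³ are unit vectors with ⟨a,b⟩ = ⟨a,c⟩ = ⟨b,c⟩ = cos θ. Then the Gram matrix T_{a,b,c} has eigenvalues 1−cos θ (with multiplicity two) and 1+2cos θ, and for every qubit density matrix ρ one has (Δ_ρA)² + (Δ_ρB)² + (Δ_ρC)² ≥ 2(1 − cos θ); moreover equality is attained by some qubit density matrix. -/

import Mathlib

open Matrix MeasureTheory Filter Set
open scoped RealInnerProductSpace Kronecker ComplexOrder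

noncomputable section

/-- ℝ³ with the Euclidean norm and inner product. -/
abbrev E3 : Type := EuclideanSpace ℝ (Fin 3)

/-- The Pauli matrices. -/
def pauli1 : Matrix (Fin 2) (Fin 2) ℂ := !![0, 1; 1, 0]
def pauli2 : Matrix (Fin 2) (Fin 2) ℂ := !![0, -Complex.I; Complex.I, 0]
def pauli3 : Matrix (Fin 2) (Fin 2) ℂ := !![1, 0; 0, -1]

/-- The qubit observable `a₀·I + a·σ`. -/
def qObs (a0 : ℝ) (a : E3) : Matrix (Fin 2) (Fin 2) ℂ :=
  (a0 : ℂ) • (1 : Matrix (Fin 2) (Fin 2) ℂ)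
    + (a 0 : ℂ) • pauli1 + (a 1 : ℂ) • pauli2 + (a 2 : ℂ) • pauli3

/-- A density matrix: positive semidefinite with trace one. -/
def IsDensityMatrix {n : Type*} [Fintype n] (ρ : Matrix n n ℂ) : Prop :=
  ρ.PosSemidef ∧ ρ.trace = 1

/-- Mean value `⟨M⟩_ρ = Tr(Mρ)` of an observable `M` in the state `ρ`. -/
def mean {n : Type*} [Fintype n] (M ρ : Matrix n n ℂ) : ℝ :=
  (Matrix.trace (M * ρ)).re

/-- Variance `(Δ_ρ M)² = Tr(M²ρ) − (Tr(Mρ))²`. -/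
def variance {n : Type*} [Fintype n] (M ρ : Matrix n n ℂ) : ℝ :=
  (Matrix.trace (M * M * ρ)).re - (mean M ρ) ^ 2

/-- Uncertainty `Δ_ρ M` (standard deviation). -/
def uncertainty {n : Type*} [Fintype n] (M ρ : Matrix n n ℂ) : ℝ :=
  Real.sqrt (variance M ρ)

/-- Gram matrix of a tuple of vectors in ℝ³. -/
def gram {m : ℕ} (v : Fin m → E3) : Matrix (Fin m) (Fin m) ℝ :=
  Matrix.of fun i j => (inner ℝ (v i) (v j) : ℝ)

lemma gram_isHermitian {m : ℕ} (v : Fin m → E3) : (gram v).IsHermitian := by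
  ext i j
  simp [_root_.gram, Matrix.conjTranspose_apply, mul_comm, real_inner_comm]

/-- Smallest eigenvalue of the Gram matrix. -/
def lamMin {m : ℕ} (v : Fin m → E3) : ℝ := ⨅ i, (gram_isHermitian v).eigenvalues i

/-- Largest eigenvalue of the Gram matrix. -/
def lamMax {m : ℕ} (v : Fin m → E3) : ℝ := ⨆ i, (gram_isHermitian v).eigenvalues i

/-!
Every qubit state is `ρ = (I + r·σ)/2` with Bloch vector `‖r‖ ≤ 1`, and for a unit vector `a` the
Pauli relations give `(Δ_ρ(a₀I + a·σ))² = 1 - ⟪a, r⟫²`. The sum of the three variances is therefore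
`3 - Σ ⟪v, r⟫²`, and Cauchy–Schwarz against `s = Σ ⟪v, r⟫ v` bounds `Σ ⟪v, r⟫²` by the largest
eigenvalue `1 + 2 cos θ` of the Gram matrix `(1 - cos θ) I + cos θ J`. Equality holds for the pure
state whose Bloch vector points along `a + b + c`.
-/

section Equiangular

variable {E : Type*} [NormedAddCommGroup E] [InnerProductSpace ℝ E]

lemma sum_inner_sq_le_of_norm_sq_sum_smul_le {ι : Type*} [Fintype ι] (v : ι → E) {L : ℝ}
    (hL : 0 ≤ L) (hv : ∀ x : ι → ℝ, ‖∑ i, x i • v i‖ ^ 2 ≤ L * ∑ i, x i ^ 2) (r : E) :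
    ∑ i, ⟪v i, r⟫ ^ 2 ≤ L * ‖r‖ ^ 2 := by
  set S := ∑ i, ⟪v i, r⟫ ^ 2
  set s := ∑ i, ⟪v i, r⟫ • v i
  have hsr : ⟪s, r⟫ = S := by simp only [s, S, sum_inner, real_inner_smul_left, sq]
  have hS : S ^ 2 ≤ L * S * ‖r‖ ^ 2 :=
    calc S ^ 2 = ⟪s, r⟫ ^ 2 := by rw [hsr]
      _ ≤ ‖s‖ ^ 2 * ‖r‖ ^ 2 := by rw [← mul_pow, ← sq_abs]; gcongr; exact abs_real_inner_le_norm s r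
      _ ≤ L * S * ‖r‖ ^ 2 := by gcongr; exact hv _
  have hS0 : 0 ≤ S := Finset.sum_nonneg fun i _ => sq_nonneg _
  nlinarith [mul_nonneg hL (sq_nonneg ‖r‖)]

variable {a b c : E} {k : ℝ}

lemma norm_sq_smul_add_smul_add_smul_of_equiangular (ha : ‖a‖ = 1) (hb : ‖b‖ = 1)
    (hc : ‖c‖ = 1) (hab : ⟪a, b⟫ = k) (hac : ⟪a, c⟫ = k) (hbc : ⟪b, c⟫ = k) (x y z : ℝ) :
    ‖x • a + y • b + z • c‖ ^ 2 = (1 - k) * (x ^ 2 + y ^ 2 + z ^ 2) + k * (x + y + z) ^ 2 := by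
  have inner_self_eq_one {u : E} (hu : ‖u‖ = 1) : ⟪u, u⟫ = 1 := by
    rw [real_inner_self_eq_norm_sq, hu, one_pow]
  rw [← real_inner_self_eq_norm_sq]
  simp only [inner_add_left, inner_add_right, real_inner_smul_left, real_inner_smul_right,
    inner_self_eq_one ha, inner_self_eq_one hb, inner_self_eq_one hc, hab, hac, hbc,
    real_inner_comm a b, real_inner_comm a c, real_inner_comm b c]
  ring

lemma sum_inner_sq_le_of_equiangular (hk : 0 ≤ k) (ha : ‖a‖ = 1) (hb : ‖b‖ = 1)
    (hc : ‖c‖ = 1) (hab : ⟪a, b⟫ = k) (hac : ⟪a, c⟫ = k) (hbc : ⟪b, c⟫ = k) (r : E) :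
    ⟪a, r⟫ ^ 2 + ⟪b, r⟫ ^ 2 + ⟪c, r⟫ ^ 2 ≤ (1 + 2 * k) * ‖r‖ ^ 2 := by
  simpa [Fin.sum_univ_three] using
    sum_inner_sq_le_of_norm_sq_sum_smul_le ![a, b, c] (by linarith) (fun x => by
      simp only [Fin.sum_univ_three, Matrix.cons_val_zero, Matrix.cons_val_one,
        Matrix.cons_val_two, Matrix.head_cons, Matrix.tail_cons]
      rw [norm_sq_smul_add_smul_add_smul_of_equiangular ha hb hc hab hac hbc]
      nlinarith [mul_nonneg hk (add_nonneg (add_nonneg (sq_nonneg (x 0 - x 1))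
        (sq_nonneg (x 0 - x 2))) (sq_nonneg (x 1 - x 2)))]) r

lemma exists_norm_eq_one_sum_inner_sq_eq_of_equiangular (hk : 0 < 1 + 2 * k) (ha : ‖a‖ = 1)
    (hb : ‖b‖ = 1) (hc : ‖c‖ = 1) (hab : ⟪a, b⟫ = k) (hac : ⟪a, c⟫ = k) (hbc : ⟪b, c⟫ = k) :
    ∃ r : E, ‖r‖ = 1 ∧ ⟪a, r⟫ ^ 2 + ⟪b, r⟫ ^ 2 + ⟪c, r⟫ ^ 2 = 1 + 2 * k := by
  have hs : ‖a + b + c‖ ^ 2 = 3 * (1 + 2 * k) := by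
    have h := norm_sq_smul_add_smul_add_smul_of_equiangular ha hb hc hab hac hbc 1 1 1
    simp only [one_smul] at h
    rw [h]; ring
  have hs0 : a + b + c ≠ 0 := by
    intro h; rw [h, norm_zero] at hs; linarith
  refine ⟨‖a + b + c‖⁻¹ • (a + b + c), norm_smul_inv_norm hs0, ?_⟩
  simp only [real_inner_smul_right, inner_add_right, real_inner_self_eq_norm_sq, ha, hb, hc,
    hab, hac, hbc, real_inner_comm a b, real_inner_comm a c, real_inner_comm b c]
  have hinv : ‖a + b + c‖⁻¹ ^ 2 = (3 * (1 + 2 * k))⁻¹ := by rw [inv_pow, hs]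
  simp only [mul_pow, hinv]
  field_simp
  ring

end Equiangular

open Polynomial in
lemma charpoly_equiangular {R : Type*} [CommRing R] (k : R) :
    (!![1, k, k; k, 1, k; k, k, 1]).charpoly = (X - C (1 - k)) ^ 2 * (X - C (1 + 2 * k)) := by
  rw [Matrix.charpoly, Matrix.det_fin_three]
  simp only [charmatrix_apply_eq, charmatrix_apply_ne, ne_eq, Fin.reduceEq, not_false_eq_true,
    Matrix.of_apply, Matrix.cons_val', Matrix.cons_val_zero, Matrix.cons_val_one,
    Matrix.cons_val_two, Matrix.head_cons, Matrix.tail_cons, Matrix.empty_val',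
    Matrix.cons_val_fin_one, Matrix.head_fin_const, map_sub, map_add, map_one, map_mul, map_ofNat]
  ring

open Polynomial in
lemma roots_charpoly_equiangular {R : Type*} [CommRing R] [IsDomain R] (k : R) :
    (!![1, k, k; k, 1, k; k, k, 1]).charpoly.roots = {1 - k, 1 - k, 1 + 2 * k} := by
  rw [charpoly_equiangular, roots_mul (mul_ne_zero (pow_ne_zero _ (X_sub_C_ne_zero _))
    (X_sub_C_ne_zero _)), roots_pow, roots_X_sub_C, roots_X_sub_C]
  rfl

lemma Matrix.IsHermitian.map_eigenvalues_eq_roots_charpoly {n : Type*} [Fintype n] [DecidableEq n]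
    {A : Matrix n n ℝ} (hA : A.IsHermitian) :
    Finset.univ.val.map hA.eigenvalues = A.charpoly.roots := by
  rw [hA.roots_charpoly_eq_eigenvalues]
  rfl

lemma gram_eq_of_equiangular {a b c : E3} {k : ℝ} (ha : ‖a‖ = 1) (hb : ‖b‖ = 1)
    (hc : ‖c‖ = 1) (hab : ⟪a, b⟫ = k) (hac : ⟪a, c⟫ = k) (hbc : ⟪b, c⟫ = k) :
    gram ![a, b, c] = !![1, k, k; k, 1, k; k, k, 1] := by
  ext i j
  fin_cases i <;> fin_cases j <;>
    simp [_root_.gram, ha, hb, hc, hab, hac, hbc, real_inner_comm a b,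
      real_inner_comm a c, real_inner_comm b c]

def blochVector (ρ : Matrix (Fin 2) (Fin 2) ℂ) : E3 :=
  !₂[(pauli1 * ρ).trace.re, (pauli2 * ρ).trace.re, (pauli3 * ρ).trace.re]

def blochState (r : E3) : Matrix (Fin 2) (Fin 2) ℂ := qObs (1 / 2) ((1 / 2 : ℝ) • r)

lemma mean_qObs (a0 : ℝ) (a : E3) (ρ : Matrix (Fin 2) (Fin 2) ℂ) :
    mean (qObs a0 a) ρ = a0 * ρ.trace.re + ⟪a, blochVector ρ⟫ := by
  simp [mean, qObs, blochVector, add_mul, PiLp.inner_apply, Fin.sum_univ_three]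
  ring

lemma qObs_mul_self (a0 : ℝ) (a : E3) :
    qObs a0 a * qObs a0 a = qObs (a0 ^ 2 + ‖a‖ ^ 2) ((2 * a0) • a) := by
  rw [EuclideanSpace.real_norm_sq_eq, Fin.sum_univ_three]
  ext i j
  fin_cases i <;> fin_cases j <;>
    simp [qObs, pauli1, pauli2, pauli3, Matrix.mul_apply, Fin.sum_univ_two] <;>
    ring_nf <;> simp only [Complex.I_sq] <;> ring

lemma trace_qObs (a0 : ℝ) (a : E3) : (qObs a0 a).trace = 2 * a0 := by
  simp [qObs, pauli1, pauli2, pauli3, Matrix.trace_fin_two]; ring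

lemma qObs_isHermitian (a0 : ℝ) (a : E3) : (qObs a0 a).IsHermitian := by
  ext i j
  fin_cases i <;> fin_cases j <;> simp [qObs, pauli1, pauli2, pauli3]

lemma variance_qObs (a0 : ℝ) (a : E3) {ρ : Matrix (Fin 2) (Fin 2) ℂ} (hρ : ρ.trace = 1) :
    variance (qObs a0 a) ρ = ‖a‖ ^ 2 - ⟪a, blochVector ρ⟫ ^ 2 := by
  rw [variance, ← mean, qObs_mul_self, mean_qObs, mean_qObs, hρ, real_inner_smul_left]
  simp only [Complex.one_re]
  ring

lemma norm_blochVector_sq (ρ : Matrix (Fin 2) (Fin 2) ℂ) (hρ : ρ.IsHermitian) :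
    ‖blochVector ρ‖ ^ 2 = ρ.trace.re ^ 2 - 4 * ρ.det.re := by
  have h10 : ρ 1 0 = star (ρ 0 1) := (hρ.apply 1 0).symm
  have h00 : (ρ 0 0).im = 0 := Complex.conj_eq_iff_im.mp (hρ.apply 0 0)
  have h11 : (ρ 1 1).im = 0 := Complex.conj_eq_iff_im.mp (hρ.apply 1 1)
  rw [EuclideanSpace.real_norm_sq_eq, Fin.sum_univ_three]
  simp [blochVector, pauli1, pauli2, pauli3, Matrix.trace_fin_two, Matrix.det_fin_two,
    Matrix.vecMul, dotProduct, Fin.sum_univ_two, h10, h00, h11]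
  ring

lemma norm_blochVector_le_one {ρ : Matrix (Fin 2) (Fin 2) ℂ} (hρ : IsDensityMatrix ρ) :
    ‖blochVector ρ‖ ≤ 1 := by
  have hdet : 0 ≤ ρ.det.re := (Complex.nonneg_iff.mp hρ.1.det_nonneg).1
  have hsq := norm_blochVector_sq ρ hρ.1.isHermitian
  rw [hρ.2, Complex.one_re] at hsq
  nlinarith [norm_nonneg (blochVector ρ)]

lemma blochVector_blochState (r : E3) : blochVector (blochState r) = r := by
  ext i
  fin_cases i <;> simp [blochVector, blochState, qObs, pauli1, pauli2, pauli3, Matrix.trace_fin_two,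
    Matrix.vecMul, dotProduct, Fin.sum_univ_two] <;> ring

lemma isDensityMatrix_blochState {r : E3} (hr : ‖r‖ = 1) : IsDensityMatrix (blochState r) := by
  have hherm : (blochState r).IsHermitian := qObs_isHermitian _ _
  have hproj : blochState r * blochState r = blochState r := by
    rw [blochState, qObs_mul_self, norm_smul, hr, smul_smul]
    norm_num
  refine ⟨?_, ?_⟩
  · simpa only [hherm.eq, hproj] using Matrix.posSemidef_conjTranspose_mul_self (blochState r)
  · rw [blochState, trace_qObs]; norm_num

/-- three unit Bloch vectors with pairwise angle θ: spectrum of the Gram matrix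
and the tight uncertainty bound 2(1 − cos θ). -/
theorem three_observables_equal_angles
    (θ a0 b0 c0 : ℝ) (hθ : θ ∈ Set.Ioc 0 (Real.pi / 2)) (a b c : E3)
    (ha : ‖a‖ = 1) (hb : ‖b‖ = 1) (hc : ‖c‖ = 1)
    (hab : (inner ℝ a b : ℝ) = Real.cos θ)
    (hac : (inner ℝ a c : ℝ) = Real.cos θ)
    (hbc : (inner ℝ b c : ℝ) = Real.cos θ) :
    (Finset.univ.val.map (gram_isHermitian ![a, b, c]).eigenvalues
        = ({1 - Real.cos θ, 1 - Real.cos θ, 1 + 2 * Real.cos θ} : Multiset ℝ)) ∧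
    (∀ ρ : Matrix (Fin 2) (Fin 2) ℂ, IsDensityMatrix ρ →
        variance (qObs a0 a) ρ + variance (qObs b0 b) ρ + variance (qObs c0 c) ρ
          ≥ 2 * (1 - Real.cos θ)) ∧
    (∃ ρ : Matrix (Fin 2) (Fin 2) ℂ, IsDensityMatrix ρ ∧
        variance (qObs a0 a) ρ + variance (qObs b0 b) ρ + variance (qObs c0 c) ρ
          = 2 * (1 - Real.cos θ)) := by
  have hk : 0 ≤ Real.cos θ := Real.cos_nonneg_of_mem_Icc ⟨by linarith [Real.pi_pos, hθ.1], hθ.2⟩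
  have hvar {ρ : Matrix (Fin 2) (Fin 2) ℂ} (hρ : ρ.trace = 1) :
      variance (qObs a0 a) ρ + variance (qObs b0 b) ρ + variance (qObs c0 c) ρ
        = 3 - (⟪a, blochVector ρ⟫ ^ 2 + ⟪b, blochVector ρ⟫ ^ 2 + ⟪c, blochVector ρ⟫ ^ 2) := by
    rw [variance_qObs _ _ hρ, variance_qObs _ _ hρ, variance_qObs _ _ hρ, ha, hb, hc]
    ring
  refine ⟨?_, fun ρ hρ => ?_, ?_⟩
  · rw [(gram_isHermitian _).map_eigenvalues_eq_roots_charpoly,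
      gram_eq_of_equiangular ha hb hc hab hac hbc, roots_charpoly_equiangular]
  · have h := sum_inner_sq_le_of_equiangular hk ha hb hc hab hac hbc (blochVector ρ)
    have hr : ‖blochVector ρ‖ ^ 2 ≤ 1 :=
      pow_le_one₀ (norm_nonneg _) (norm_blochVector_le_one hρ)
    rw [ge_iff_le, hvar hρ.2]
    nlinarith
  · obtain ⟨r, hr, hsum⟩ :=
      exists_norm_eq_one_sum_inner_sq_eq_of_equiangular (by linarith) ha hb hc hab hac hbc
    refine ⟨blochState r, isDensityMatrix_blochState hr, ?_⟩
    rw [hvar (isDensityMatrix_blochState hr).2, blochVector_blochState, hsum]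
    ring

end
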